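/- (De Giorgi–Poincaré inequality.) For every N ≥ 1 there exists a constant C = C(N) > 0 such that the following holds. Let r > 0, let K_r ⊂ ℝ^N be an axis-parallel open cube of side length r, let u be continuously differentiable on a neighborhood of the closure of K_r, and let k, h ∈ ℝ with k ≤ h. Then (h − k) · |{x ∈ K_r : u(x) ≤ k}| · |{x ∈ K_r : u(x) ≥ h}| ≤ C(N)·r^{N+1} · ∫_{{x ∈ K_r : k < u(x) ≤ h}} ‖∇u(x)‖ dx. -/

import Mathlib

/-!
Join a point `x` of the cube `K` with `u x ≤ k` to a point `y` with `u y ≥ h`. Along the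
segment, `u` has to climb from `k` to `h` while staying in the band `S = {k < u ≤ h}`, so
`h - k ≤ |y - x| ∫₀¹ (‖∇u‖ 1_S)(x + t (y - x)) dt ≤ diam K ∫₀¹ …`.
Integrate over `x` and `y` and exchange the order of integration. For a fixed `t`, one of the
two weights `1 - t`, `t` is at least `1/2`, and integrating first in the corresponding variable
is a change of variables with Jacobian at most `2^N`. So each `t`-slice is at most
`2^N |K| ∫_S ‖∇u‖`. Since `diam K ≤ √N r` and `|K| = r^N`, this gives `C = 2^N √N`.
-/

open MeasureTheory Set
open Module AffineMap
open scoped ENNReal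

section OneDim

variable {f f' : ℝ → ℝ} {a b k h : ℝ}

lemma ContinuousOn.exists_crossing_subinterval (hab : a ≤ b) (hf : ContinuousOn f (Icc a b))
    (ha : f a ≤ k) (hb : h ≤ f b) :
    ∃ a' b', a ≤ a' ∧ a' ≤ b' ∧ b' ≤ b ∧ f a' ≤ k ∧ h ≤ f b' ∧ Ioo a' b' ⊆ f ⁻¹' Ioo k h := by
  set T := Icc a b ∩ f ⁻¹' Ici h
  have hT : IsClosed T := hf.preimage_isClosed_of_isClosed isClosed_Icc isClosed_Ici
  have hbT : b ∈ T := ⟨right_mem_Icc.2 hab, hb⟩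
  have hTbdd : BddBelow T := ⟨a, fun t ht => ht.1.1⟩
  obtain ⟨⟨hab', hbb'⟩, hb'⟩ := hT.csInf_mem ⟨b, hbT⟩ hTbdd
  set b' := sInf T
  set T' := Icc a b' ∩ f ⁻¹' Iic k
  have hT' : IsClosed T' :=
    (hf.mono (Icc_subset_Icc_right hbb')).preimage_isClosed_of_isClosed isClosed_Icc isClosed_Iic
  have hT'bdd : BddAbove T' := ⟨b', fun t ht => ht.1.2⟩
  obtain ⟨⟨haa', ha'b'⟩, ha'⟩ := hT'.csSup_mem ⟨a, ⟨left_mem_Icc.2 hab', ha⟩⟩ hT'bdd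
  refine ⟨sSup T', b', haa', ha'b', hbb', ha', hb', fun t ht => ⟨?_, ?_⟩⟩
  · by_contra! hft
    exact (le_csSup hT'bdd ⟨⟨haa'.trans ht.1.le, ht.2.le⟩, hft⟩).not_gt ht.1
  · by_contra! hft
    exact (csInf_le hTbdd ⟨⟨haa'.trans ht.1.le, ht.2.le.trans hbb'⟩, hft⟩).not_gt ht.2

lemma ofReal_sub_le_setLIntegral_of_hasDerivAt {φ : ℝ → ℝ≥0∞} (hab : a ≤ b)
    (hf : ∀ t ∈ Icc a b, HasDerivAt f (f' t) t) (hf' : IntervalIntegrable f' volume a b)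
    (ha : f a ≤ k) (hb : h ≤ f b) (hφ : ∀ t ∈ Icc a b, f t ∈ Ioo k h → ‖f' t‖ₑ ≤ φ t) :
    ENNReal.ofReal (h - k) ≤ ∫⁻ t in Icc a b, φ t := by
  obtain ⟨a', b', haa', ha'b', hbb', ha', hb', hcross⟩ :=
    ContinuousOn.exists_crossing_subinterval hab
      (fun t ht => (hf t ht).continuousAt.continuousWithinAt) ha hb
  have hsub : Icc a' b' ⊆ Icc a b := Icc_subset_Icc haa' hbb'
  have hftc : ∫ t in a'..b', f' t = f b' - f a' := by
    refine intervalIntegral.integral_eq_sub_of_hasDerivAt (fun t ht => hf t (hsub ?_)) ?_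
    · rwa [uIcc_of_le ha'b'] at ht
    · exact hf'.mono_set (by rwa [uIcc_of_le ha'b', uIcc_of_le hab])
  calc ENNReal.ofReal (h - k) ≤ ENNReal.ofReal (∫ t in a'..b', f' t) := by
        rw [hftc]; gcongr
    _ ≤ ‖∫ t in Ioc a' b', f' t‖ₑ := by
        rw [intervalIntegral.integral_of_le ha'b']; exact Real.ofReal_le_enorm _
    _ ≤ ∫⁻ t in Ioc a' b', ‖f' t‖ₑ := enorm_integral_le_lintegral_enorm _
    _ = ∫⁻ t in Ioo a' b', ‖f' t‖ₑ := (setLIntegral_congr Ioo_ae_eq_Ioc).symm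
    _ ≤ ∫⁻ t in Ioo a' b', φ t :=
        setLIntegral_mono' measurableSet_Ioo fun t ht =>
          hφ t (hsub (Ioo_subset_Icc_self ht)) (hcross ht)
    _ ≤ ∫⁻ t in Icc a b, φ t := lintegral_mono_set (Ioo_subset_Icc_self.trans hsub)

end OneDim

section Segment

variable {E : Type*} [NormedAddCommGroup E] [NormedSpace ℝ E]

lemma ofReal_sub_le_enorm_mul_lintegral_lineMap {u : E → ℝ} {U : Set E} {G : E → ℝ≥0∞}
    {x y : E} {k h : ℝ} (hU : IsOpen U) (hu : ContDiffOn ℝ 1 u U) (hxy : segment ℝ x y ⊆ U)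
    (hG : ∀ z ∈ segment ℝ x y, u z ∈ Ioo k h → ‖fderiv ℝ u z‖ₑ ≤ G z)
    (hx : u x ≤ k) (hy : h ≤ u y) :
    ENNReal.ofReal (h - k) ≤ ‖y - x‖ₑ * ∫⁻ t in Icc (0 : ℝ) 1, G (lineMap x y t) := by
  have hmem : ∀ t ∈ Icc (0 : ℝ) 1, lineMap x y t ∈ segment ℝ x y := fun t ht =>
    segment_eq_image_lineMap ℝ x y ▸ mem_image_of_mem _ ht
  have hderiv : ∀ t ∈ Icc (0 : ℝ) 1,
      HasDerivAt (u ∘ lineMap x y) (fderiv ℝ u (lineMap x y t) (y - x)) t := fun t ht =>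
    ((hu.differentiableOn one_ne_zero).differentiableAt
      (hU.mem_nhds (hxy (hmem t ht)))).hasFDerivAt.comp_hasDerivAt t hasDerivAt_lineMap
  have hcont : ContinuousOn (fun t : ℝ => fderiv ℝ u (lineMap x y t) (y - x)) (Icc 0 1) :=
    ((hu.continuousOn_fderiv_of_isOpen hU le_rfl).comp lineMap_continuous.continuousOn
      fun t ht => hxy (hmem t ht)).clm_apply continuousOn_const
  rw [← lintegral_const_mul' _ _ enorm_ne_top]
  refine ofReal_sub_le_setLIntegral_of_hasDerivAt zero_le_one hderiv
    (hcont.intervalIntegrable_of_Icc zero_le_one) (by simpa) (by simpa) fun t ht hut => ?_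
  rw [mul_comm]
  exact (ContinuousLinearMap.le_opENorm _ _).trans (by gcongr; exact hG _ (hmem t ht) hut)

lemma ofReal_sub_le_ediam_mul_lintegral_lineMap {Q : Set E} {u : E → ℝ} {k h : ℝ} {x y : E}
    (hQo : IsOpen Q) (hQc : Convex ℝ Q) (hu : ContDiffOn ℝ 1 u Q) (hxQ : x ∈ Q) (hyQ : y ∈ Q)
    (hx : u x ≤ k) (hy : h ≤ u y) :
    ENNReal.ofReal (h - k) ≤ Metric.ediam Q * ∫⁻ t in Icc (0 : ℝ) 1,
      {z ∈ Q | k < u z ∧ u z ≤ h}.indicator (fun z => ‖fderiv ℝ u z‖ₑ) (lineMap x y t) := by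
  set S := {z ∈ Q | k < u z ∧ u z ≤ h}
  have hxy := hQc.segment_subset hxQ hyQ
  refine (ofReal_sub_le_enorm_mul_lintegral_lineMap (G := S.indicator fun z => ‖fderiv ℝ u z‖ₑ)
    hQo hu hxy (fun z hz hzu => ?_) hx hy).trans ?_
  · exact (indicator_of_mem (s := S) (f := fun z => ‖fderiv ℝ u z‖ₑ)
      ⟨hxy hz, hzu.1, hzu.2.le⟩).ge
  · gcongr
    rw [← edist_eq_enorm_sub]
    exact Metric.edist_le_ediam_of_mem hyQ hxQ

end Segment

lemma ContinuousOn.measurableSet_inter_preimage {α β : Type*} [TopologicalSpace α]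
    [MeasurableSpace α] [OpensMeasurableSpace α] [TopologicalSpace β] [MeasurableSpace β]
    [BorelSpace β] {f : α → β} {s : Set α} {t : Set β} (hf : ContinuousOn f s)
    (hs : MeasurableSet s) (ht : MeasurableSet t) : MeasurableSet (s ∩ f ⁻¹' t) := by
  rw [← Subtype.image_preimage_coe]
  exact hs.subtype_image (hf.domRestrict.measurable ht)

lemma lintegral_lintegral_lintegral_comm {α β γ : Type*} [MeasurableSpace α]
    [MeasurableSpace β] [MeasurableSpace γ] {μ : Measure α} {ν : Measure β} {ρ : Measure γ}
    [SFinite μ] [SFinite ν] [SFinite ρ] {F : α → β → γ → ℝ≥0∞}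
    (hF : Measurable fun p : α × β × γ => F p.1 p.2.1 p.2.2) :
    ∫⁻ x, ∫⁻ y, (∫⁻ z, F x y z ∂ρ) ∂ν ∂μ = ∫⁻ z, ∫⁻ x, ∫⁻ y, F x y z ∂ν ∂μ ∂ρ := by
  have hF' : Measurable fun p : (α × γ) × β => F p.1.1 p.2 p.1.2 :=
    hF.comp (f := fun p : (α × γ) × β => (p.1.1, p.2, p.1.2)) (by fun_prop)
  calc ∫⁻ x, ∫⁻ y, (∫⁻ z, F x y z ∂ρ) ∂ν ∂μ = ∫⁻ x, ∫⁻ z, ∫⁻ y, F x y z ∂ν ∂ρ ∂μ :=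
        lintegral_congr fun x => lintegral_lintegral_swap
          (hF.comp (f := fun p : β × γ => (x, p)) measurable_prodMk_left).aemeasurable
    _ = ∫⁻ z, ∫⁻ x, ∫⁻ y, F x y z ∂ν ∂μ ∂ρ :=
        lintegral_lintegral_swap hF'.lintegral_prod_right'.aemeasurable

section Haar

variable {E : Type*} [NormedAddCommGroup E] [NormedSpace ℝ E] [MeasurableSpace E] [BorelSpace E]
  [FiniteDimensional ℝ E] (μ : Measure E) [μ.IsAddHaarMeasure] {G : E → ℝ≥0∞}

lemma lintegral_comp_add_smul (hG : Measurable G) (a : E) {τ : ℝ} (hτ : τ ≠ 0) :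
    ∫⁻ y, G (a + τ • y) ∂μ = ENNReal.ofReal |(τ ^ finrank ℝ E)⁻¹| * ∫⁻ z, G z ∂μ := by
  rw [← lintegral_map (f := fun z => G (a + z)) (g := fun y => τ • y)
    (hG.comp (measurable_const_add a)) (measurable_const_smul τ), Measure.map_addHaar_smul μ hτ,
    lintegral_smul_measure, lintegral_add_left_eq_self (fun z => G z) a, smul_eq_mul]

lemma setLIntegral_comp_add_smul_le (hG : Measurable G) (a : E) (s : Set E) {τ : ℝ}
    (hτ : 1 / 2 ≤ τ) : ∫⁻ y in s, G (a + τ • y) ∂μ ≤ 2 ^ finrank ℝ E * ∫⁻ z, G z ∂μ := by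
  have hτ0 : 0 < τ := by linarith
  calc ∫⁻ y in s, G (a + τ • y) ∂μ ≤ ∫⁻ y, G (a + τ • y) ∂μ := setLIntegral_le_lintegral _ _
    _ = ENNReal.ofReal |(τ ^ finrank ℝ E)⁻¹| * ∫⁻ z, G z ∂μ :=
        lintegral_comp_add_smul μ hG a hτ0.ne'
    _ ≤ 2 ^ finrank ℝ E * ∫⁻ z, G z ∂μ := by
        rw [abs_of_pos (by positivity), ← inv_pow, ENNReal.ofReal_pow (by positivity)]
        gcongr
        rw [ENNReal.ofReal_le_iff_le_toReal (by simp)]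
        simpa using inv_le_of_inv_le₀ (by norm_num) (by linarith)

lemma lintegral_lintegral_comp_lineMap_le (hG : Measurable G) (s t : Set E) (τ : ℝ) :
    ∫⁻ x in s, ∫⁻ y in t, G (lineMap x y τ) ∂μ ∂μ ≤
      2 ^ finrank ℝ E * max (μ s) (μ t) * ∫⁻ z, G z ∂μ := by
  simp only [lineMap_apply_module]
  rcases le_total (1 / 2) τ with hτ | hτ
  · calc ∫⁻ x in s, ∫⁻ y in t, G ((1 - τ) • x + τ • y) ∂μ ∂μ
          ≤ ∫⁻ x in s, 2 ^ finrank ℝ E * ∫⁻ z, G z ∂μ ∂μ :=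
          lintegral_mono fun x => setLIntegral_comp_add_smul_le μ hG _ t hτ
      _ ≤ 2 ^ finrank ℝ E * max (μ s) (μ t) * ∫⁻ z, G z ∂μ := by
          rw [setLIntegral_const, mul_right_comm]
          gcongr
          exact le_max_left _ _
  · have hmeas : Measurable fun p : E × E => G ((1 - τ) • p.1 + τ • p.2) :=
      hG.comp (Continuous.measurable (by fun_prop))
    rw [lintegral_lintegral_swap hmeas.aemeasurable]
    calc ∫⁻ y in t, ∫⁻ x in s, G ((1 - τ) • x + τ • y) ∂μ ∂μ
          ≤ ∫⁻ y in t, 2 ^ finrank ℝ E * ∫⁻ z, G z ∂μ ∂μ := lintegral_mono fun y => by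
          simpa only [add_comm] using setLIntegral_comp_add_smul_le μ hG (τ • y) s
            (by linarith : 1 / 2 ≤ 1 - τ)
      _ ≤ 2 ^ finrank ℝ E * max (μ s) (μ t) * ∫⁻ z, G z ∂μ := by
          rw [setLIntegral_const, mul_right_comm]
          gcongr
          exact le_max_right _ _

theorem ofReal_sub_mul_measure_mul_measure_le {Q : Set E} {u : E → ℝ} {k h : ℝ}
    (hQo : IsOpen Q) (hQc : Convex ℝ Q) (hu : ContDiffOn ℝ 1 u Q) :
    ENNReal.ofReal (h - k) * μ {x ∈ Q | u x ≤ k} * μ {x ∈ Q | h ≤ u x} ≤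
      2 ^ finrank ℝ E * Metric.ediam Q * μ Q *
        ∫⁻ x in {x ∈ Q | k < u x ∧ u x ≤ h}, ‖fderiv ℝ u x‖ₑ ∂μ := by
  set A := {x ∈ Q | u x ≤ k}
  set B := {x ∈ Q | h ≤ u x}
  set S := {x ∈ Q | k < u x ∧ u x ≤ h}
  set D := Metric.ediam Q
  have hmeas {t : Set ℝ} (ht : MeasurableSet t) : MeasurableSet (Q ∩ u ⁻¹' t) :=
    hu.continuousOn.measurableSet_inter_preimage hQo.measurableSet ht
  set G := S.indicator fun z => ‖fderiv ℝ u z‖ₑ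
  have hS : MeasurableSet S := hmeas measurableSet_Ioc
  have hG : Measurable G := (measurable_fderiv ℝ u).enorm.indicator hS
  have hGS : ∫⁻ z, G z ∂μ = ∫⁻ z in S, ‖fderiv ℝ u z‖ₑ ∂μ := lintegral_indicator hS _
  have hseg : ∀ x ∈ A, ∀ y ∈ B,
      ENNReal.ofReal (h - k) ≤ ∫⁻ t in Icc (0 : ℝ) 1, D * G (lineMap x y t) := fun x hx y hy =>
    (ofReal_sub_le_ediam_mul_lintegral_lineMap hQo hQc hu hx.1 hy.1 hx.2 hy.2).trans_eq
      (lintegral_const_mul _ (hG.comp lineMap_continuous.measurable)).symm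
  have hF : Measurable fun p : E × E × ℝ => D * G (lineMap p.1 p.2.1 p.2.2) :=
    (hG.comp (Continuous.measurable (by fun_prop))).const_mul D
  have hmax : max (μ A) (μ B) ≤ μ Q :=
    max_le (measure_mono fun _ hx => hx.1) (measure_mono fun _ hx => hx.1)
  calc ENNReal.ofReal (h - k) * μ A * μ B
        = ∫⁻ x in A, ∫⁻ y in B, ENNReal.ofReal (h - k) ∂μ ∂μ := by
        rw [setLIntegral_const, setLIntegral_const, mul_right_comm]
    _ ≤ ∫⁻ x in A, ∫⁻ y in B, (∫⁻ t in Icc (0 : ℝ) 1, D * G (lineMap x y t)) ∂μ ∂μ :=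
        setLIntegral_mono' (hmeas measurableSet_Iic) fun x hx =>
          setLIntegral_mono' (hmeas measurableSet_Ici) fun y hy => hseg x hx y hy
    _ = ∫⁻ t in Icc (0 : ℝ) 1, ∫⁻ x in A, ∫⁻ y in B, D * G (lineMap x y t) ∂μ ∂μ :=
        lintegral_lintegral_lintegral_comm hF
    _ ≤ ∫⁻ t in Icc (0 : ℝ) 1, 2 ^ finrank ℝ E * max (μ A) (μ B) * ∫⁻ z, D * G z ∂μ :=
        lintegral_mono fun t => lintegral_lintegral_comp_lineMap_le μ (hG.const_mul D) A B t
    _ = 2 ^ finrank ℝ E * D * max (μ A) (μ B) * ∫⁻ z in S, ‖fderiv ℝ u z‖ₑ ∂μ := by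
        rw [setLIntegral_const, Real.volume_Icc, lintegral_const_mul _ hG, hGS]
        simp only [sub_zero, ENNReal.ofReal_one, mul_one]
        ring
    _ ≤ 2 ^ finrank ℝ E * D * μ Q * ∫⁻ x in S, ‖fderiv ℝ u x‖ₑ ∂μ := by gcongr

end Haar

section Cube

variable {ι : Type*}

def openCube (c : EuclideanSpace ℝ ι) (r : ℝ) : Set (EuclideanSpace ℝ ι) :=
  {x | ∀ i, x i ∈ Ioo (c i) (c i + r)}

variable (c : EuclideanSpace ℝ ι) (r : ℝ)

lemma openCube_eq_preimage_pi :
    openCube c r = WithLp.ofLp ⁻¹' univ.pi fun i => Ioo (c i) (c i + r) := by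
  ext x
  simp [openCube]

lemma isOpen_openCube [Finite ι] : IsOpen (openCube c r) := by
  rw [openCube_eq_preimage_pi]
  exact (isOpen_set_pi finite_univ fun _ _ => isOpen_Ioo).preimage (PiLp.continuous_ofLp 2 _)

lemma convex_openCube : Convex ℝ (openCube c r) := fun x hx y hy a b ha hb hab i => by
  simpa using convex_Ioo (c i) (c i + r) (hx i) (hy i) ha hb hab

lemma volume_openCube [Fintype ι] (hr : 0 ≤ r) :
    volume (openCube c r) = ENNReal.ofReal (r ^ Fintype.card ι) := by
  rw [openCube_eq_preimage_pi, (PiLp.volume_preserving_ofLp ι).measure_preimage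
    (MeasurableSet.univ_pi fun _ => measurableSet_Ioo).nullMeasurableSet, volume_pi_pi]
  simp [Real.volume_Ioo, ENNReal.ofReal_pow hr]

lemma ediam_openCube_le [Fintype ι] (hr : 0 ≤ r) :
    Metric.ediam (openCube c r) ≤ ENNReal.ofReal (√(Fintype.card ι) * r) := by
  refine Metric.ediam_le fun x hx y hy => ?_
  rw [edist_dist, EuclideanSpace.dist_eq]
  gcongr
  calc √(∑ i, dist (x i) (y i) ^ 2) ≤ √(∑ _i : ι, r ^ 2) := by
        gcongr with i
        obtain ⟨hx₁, hx₂⟩ := hx i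
        obtain ⟨hy₁, hy₂⟩ := hy i
        rw [Real.dist_eq, abs_le]
        constructor <;> linarith
    _ = √(Fintype.card ι) * r := by
        rw [Finset.sum_const, Finset.card_univ, nsmul_eq_mul, Real.sqrt_mul (by positivity),
          Real.sqrt_sq hr]

lemma isBounded_openCube [Fintype ι] (hr : 0 ≤ r) : Bornology.IsBounded (openCube c r) :=
  Metric.isBounded_iff_ediam_ne_top.2 ((ediam_openCube_le c r hr).trans_lt ENNReal.ofReal_lt_top).ne

theorem ofReal_sub_mul_volume_mul_volume_le_openCube [Fintype ι] (hr : 0 ≤ r)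
    {u : EuclideanSpace ℝ ι → ℝ} {U : Set (EuclideanSpace ℝ ι)} (hU : IsOpen U)
    (hKU : closure (openCube c r) ⊆ U) (hu : ContDiffOn ℝ 1 u U) (k h : ℝ) :
    ENNReal.ofReal (h - k) * volume {x ∈ openCube c r | u x ≤ k} *
        volume {x ∈ openCube c r | h ≤ u x} ≤
      ENNReal.ofReal (2 ^ Fintype.card ι * √(Fintype.card ι) * r ^ (Fintype.card ι + 1) *
        ∫ x in {x ∈ openCube c r | k < u x ∧ u x ≤ h}, ‖fderiv ℝ u x‖) := by
  have hint : IntegrableOn (fderiv ℝ u) (openCube c r) :=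
    ((hu.continuousOn_fderiv_of_isOpen hU le_rfl).mono hKU).integrableOn_compact
      (isBounded_openCube c r hr).isCompact_closure |>.mono_set subset_closure
  have key := ofReal_sub_mul_measure_mul_measure_le volume (isOpen_openCube c r)
    (convex_openCube c r) (hu.mono (subset_closure.trans hKU)) (k := k) (h := h)
  rw [finrank_euclideanSpace, volume_openCube c r hr,
    ← ofReal_integral_norm_eq_lintegral_enorm (hint.mono_set fun _ hx => hx.1)] at key
  set I := ∫ x in {x ∈ openCube c r | k < u x ∧ u x ≤ h}, ‖fderiv ℝ u x‖
  calc _ ≤ 2 ^ Fintype.card ι * ENNReal.ofReal (√(Fintype.card ι) * r) *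
          ENNReal.ofReal (r ^ Fintype.card ι) * ENNReal.ofReal I := by
        grw [key, ediam_openCube_le c r hr]
    _ = _ := by
        have hI : 0 ≤ I := integral_nonneg fun _ => norm_nonneg _
        rw [← ENNReal.ofReal_ofNat, ← ENNReal.ofReal_pow zero_le_two, ← ENNReal.ofReal_mul,
          ← ENNReal.ofReal_mul, ← ENNReal.ofReal_mul]
        · ring_nf
        all_goals positivity

end Cube

lemma norm_gradient {F : Type*} [NormedAddCommGroup F] [InnerProductSpace ℝ F] [CompleteSpace F]
    (f : F → ℝ) (x : F) : ‖gradient f x‖ = ‖fderiv ℝ f x‖ :=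
  (InnerProductSpace.toDual ℝ F).symm.norm_map _

theorem de_giorgi_poincare (N : ℕ) (hN : 1 ≤ N) :
    ∃ C : ℝ, 0 < C ∧
      ∀ (r : ℝ), 0 < r →
      ∀ c : EuclideanSpace ℝ (Fin N),
      ∀ (u : EuclideanSpace ℝ (Fin N) → ℝ) (U : Set (EuclideanSpace ℝ (Fin N))),
        IsOpen U →
        closure {x : EuclideanSpace ℝ (Fin N) | ∀ i, x i ∈ Ioo (c i) (c i + r)} ⊆ U →
        ContDiffOn ℝ 1 u U →
        ∀ k h : ℝ, k ≤ h →
          (h - k) *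
              (volume {x : EuclideanSpace ℝ (Fin N) |
                (∀ i, x i ∈ Ioo (c i) (c i + r)) ∧ u x ≤ k}).toReal *
              (volume {x : EuclideanSpace ℝ (Fin N) |
                (∀ i, x i ∈ Ioo (c i) (c i + r)) ∧ h ≤ u x}).toReal ≤
            C * r ^ (N + 1) *
              ∫ x in {x : EuclideanSpace ℝ (Fin N) |
                (∀ i, x i ∈ Ioo (c i) (c i + r)) ∧ k < u x ∧ u x ≤ h},
                ‖gradient u x‖ := by
  refine ⟨2 ^ N * √N, by positivity, fun r hr c u U hU hKU hu k h hkh => ?_⟩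
  have key := ofReal_sub_mul_volume_mul_volume_le_openCube c r hr.le hU hKU hu k h
  rw [Fintype.card_fin] at key
  simp only [norm_gradient]
  rw [← ENNReal.toReal_ofReal (sub_nonneg.2 hkh), ← ENNReal.toReal_mul, ← ENNReal.toReal_mul]
  exact ENNReal.toReal_le_of_le_ofReal (by positivity) key
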